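/- arXiv:2007.05141 — 6 statements merged into one kernel-verified Lean document; each statement's English description precedes it below -/
import Mathlib

section
/- Let δ ∈ (0,1) and let {ε_t}_{t≥0} and {e_t}_{t≥0} be sequences of nonnegative reals such that ε_t ≤ δ^t ε_0 + Σ_{τ=0}^{t-1} δ^{t-τ-1} e_τ for all t ≥ 0. Then for all t ≥ 1, Σ_{τ=1}^{t} ε_τ² ≤ (2/(1-δ)²) Σ_{τ=0}^{t-1} e_τ² + (2/(1-δ²)) ε_0². -/
/-! Squaring the recursion bounds `ε τ ^ 2` by `2 δ^(2τ) ε 0 ^ 2` plus twice the square of the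
convolution of `e` with the kernel `k ↦ δ ^ k`. Cauchy–Schwarz against the kernel weights and an
exchange of the order of summation bound the sum of these squares by the squared `ℓ¹` norm of the
kernel, `(1 - δ)⁻²`, times `∑ e τ ^ 2` (Young's inequality); the initial terms form a geometric
series in `δ ^ 2`. -/

open Finset

section GeometricKernel

variable {δ : ℝ}

lemma geom_sum_le_inv_one_sub (hδ₀ : 0 ≤ δ) (hδ₁ : δ < 1) (n : ℕ) :
    ∑ i ∈ range n, δ ^ i ≤ (1 - δ)⁻¹ := by
  simpa [← Nat.Ico_zero_eq_range, div_eq_inv_mul] using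
    geom_sum_Ico_le_of_lt_one (m := 0) (n := n) hδ₀ hδ₁

lemma sum_Icc_one_pow_le (hδ₀ : 0 ≤ δ) (hδ₁ : δ < 1) (t : ℕ) :
    ∑ τ ∈ Icc 1 t, δ ^ τ ≤ (1 - δ)⁻¹ := by
  calc ∑ τ ∈ Icc 1 t, δ ^ τ ≤ ∑ τ ∈ range (t + 1), δ ^ τ :=
        sum_le_sum_of_subset_of_nonneg
          (fun τ hτ => by simp only [mem_Icc, mem_range] at hτ ⊢; omega)
          (fun τ _ _ => pow_nonneg hδ₀ τ)
    _ ≤ (1 - δ)⁻¹ := geom_sum_le_inv_one_sub hδ₀ hδ₁ _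

lemma sum_range_pow_sub_le (hδ₀ : 0 ≤ δ) (hδ₁ : δ < 1) (n : ℕ) :
    ∑ j ∈ range n, δ ^ (n - j - 1) ≤ (1 - δ)⁻¹ := by
  rw [← sum_range_reflect]
  refine (sum_congr rfl fun j hj => ?_).trans_le (geom_sum_le_inv_one_sub hδ₀ hδ₁ n)
  rw [mem_range] at hj
  congr 1
  omega

lemma sum_Icc_pow_sub_le (hδ₀ : 0 ≤ δ) (hδ₁ : δ < 1) (j t : ℕ) :
    ∑ τ ∈ Icc (j + 1) t, δ ^ (τ - j - 1) ≤ (1 - δ)⁻¹ := by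
  rw [← Ico_add_one_right_eq_Icc, sum_Ico_eq_sum_range]
  refine (sum_congr rfl fun k _ => ?_).trans_le (geom_sum_le_inv_one_sub hδ₀ hδ₁ _)
  congr 1
  omega

lemma sq_sum_pow_sub_mul_le (hδ₀ : 0 ≤ δ) (hδ₁ : δ < 1) (e : ℕ → ℝ) (τ : ℕ) :
    (∑ j ∈ range τ, δ ^ (τ - j - 1) * e j) ^ 2 ≤
      (1 - δ)⁻¹ * ∑ j ∈ range τ, δ ^ (τ - j - 1) * e j ^ 2 := by
  calc (∑ j ∈ range τ, δ ^ (τ - j - 1) * e j) ^ 2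
      ≤ (∑ j ∈ range τ, δ ^ (τ - j - 1)) * ∑ j ∈ range τ, δ ^ (τ - j - 1) * e j ^ 2 :=
        sum_sq_le_sum_mul_sum_of_sq_le_mul _ (fun j _ => pow_nonneg hδ₀ _)
          (fun j _ => mul_nonneg (pow_nonneg hδ₀ _) (sq_nonneg _))
          (fun j _ => le_of_eq (by ring))
    _ ≤ (1 - δ)⁻¹ * ∑ j ∈ range τ, δ ^ (τ - j - 1) * e j ^ 2 := by
        gcongr
        exact sum_range_pow_sub_le hδ₀ hδ₁ τ

lemma sum_Icc_sq_sum_pow_sub_mul_le (hδ₀ : 0 ≤ δ) (hδ₁ : δ < 1) (e : ℕ → ℝ) (t : ℕ) :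
    ∑ τ ∈ Icc 1 t, (∑ j ∈ range τ, δ ^ (τ - j - 1) * e j) ^ 2 ≤
      ((1 - δ) ^ 2)⁻¹ * ∑ j ∈ range t, e j ^ 2 := by
  calc ∑ τ ∈ Icc 1 t, (∑ j ∈ range τ, δ ^ (τ - j - 1) * e j) ^ 2
      ≤ ∑ τ ∈ Icc 1 t, (1 - δ)⁻¹ * ∑ j ∈ range τ, δ ^ (τ - j - 1) * e j ^ 2 :=
        sum_le_sum fun τ _ => sq_sum_pow_sub_mul_le hδ₀ hδ₁ e τ
    _ = (1 - δ)⁻¹ * ∑ j ∈ range t, (∑ τ ∈ Icc (j + 1) t, δ ^ (τ - j - 1)) * e j ^ 2 := by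
        simp_rw [← mul_sum, sum_mul]
        congr 1
        exact sum_comm' fun τ j => by simp only [mem_Icc, mem_range]; omega
    _ ≤ (1 - δ)⁻¹ * ∑ j ∈ range t, (1 - δ)⁻¹ * e j ^ 2 := by
        have : 0 ≤ (1 - δ)⁻¹ := inv_nonneg.2 (sub_nonneg.2 hδ₁.le)
        gcongr with j
        exact sum_Icc_pow_sub_le hδ₀ hδ₁ j t
    _ = ((1 - δ) ^ 2)⁻¹ * ∑ j ∈ range t, e j ^ 2 := by
        rw [← mul_sum, ← mul_assoc, ← mul_inv, sq]

end GeometricKernel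

lemma sq_le_two_mul_sq_add_two_mul_sq {x a b : ℝ} (hx : 0 ≤ x) (h : x ≤ a + b) :
    x ^ 2 ≤ 2 * a ^ 2 + 2 * b ^ 2 := by
  nlinarith [sq_nonneg (a - b)]

theorem stmt_0_general (δ : ℝ) (hδ : δ ∈ Set.Ioo (0:ℝ) 1)
    (ε e : ℕ → ℝ) (hε : ∀ t, 0 ≤ ε t)
    (hrec : ∀ t, ε t ≤ δ ^ t * ε 0 + ∑ τ ∈ Finset.range t, δ ^ (t - τ - 1) * e τ) :
    ∀ t ≥ 1, ∑ τ ∈ Finset.Icc 1 t, (ε τ) ^ 2 ≤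
      2 / (1 - δ) ^ 2 * ∑ τ ∈ Finset.range t, (e τ) ^ 2 + 2 / (1 - δ ^ 2) * (ε 0) ^ 2 := by
  obtain ⟨hδ₀, hδ₁⟩ := hδ
  have hδ₂ : δ ^ 2 < 1 := pow_lt_one₀ hδ₀.le hδ₁ two_ne_zero
  intro t _
  set S : ℕ → ℝ := fun τ => ∑ j ∈ range τ, δ ^ (τ - j - 1) * e j
  calc ∑ τ ∈ Icc 1 t, ε τ ^ 2
      ≤ ∑ τ ∈ Icc 1 t, (2 * ε 0 ^ 2 * (δ ^ 2) ^ τ + 2 * S τ ^ 2) := by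
        refine sum_le_sum fun τ _ => ?_
        calc ε τ ^ 2 ≤ 2 * (δ ^ τ * ε 0) ^ 2 + 2 * S τ ^ 2 :=
              sq_le_two_mul_sq_add_two_mul_sq (hε τ) (hrec τ)
          _ = 2 * ε 0 ^ 2 * (δ ^ 2) ^ τ + 2 * S τ ^ 2 := by ring
    _ = 2 * ε 0 ^ 2 * ∑ τ ∈ Icc 1 t, (δ ^ 2) ^ τ + 2 * ∑ τ ∈ Icc 1 t, S τ ^ 2 := by
        rw [sum_add_distrib, mul_sum, mul_sum]
    _ ≤ 2 * ε 0 ^ 2 * (1 - δ ^ 2)⁻¹ + 2 * (((1 - δ) ^ 2)⁻¹ * ∑ τ ∈ range t, e τ ^ 2) := by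
        gcongr
        · exact sum_Icc_one_pow_le (sq_nonneg δ) hδ₂ t
        · exact sum_Icc_sq_sum_pow_sub_mul_le hδ₀.le hδ₁ e t
    _ = _ := by ring

theorem stmt_0 (δ : ℝ) (hδ : δ ∈ Set.Ioo (0:ℝ) 1)
    (ε e : ℕ → ℝ) (hε : ∀ t, 0 ≤ ε t) (he : ∀ t, 0 ≤ e t)
    (hrec : ∀ t, ε t ≤ δ ^ t * ε 0 + ∑ τ ∈ Finset.range t, δ ^ (t - τ - 1) * e τ) :
    ∀ t ≥ 1, ∑ τ ∈ Finset.Icc 1 t, (ε τ) ^ 2 ≤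
      2 / (1 - δ) ^ 2 * ∑ τ ∈ Finset.range t, (e τ) ^ 2 + 2 / (1 - δ ^ 2) * (ε 0) ^ 2 :=
  stmt_0_general δ hδ ε e hε hrec
end

section
/- Let d : ℝ^m → ℝ be differentiable and 1-strongly convex on a nonempty closed convex set X ⊆ ℝ^m, and for z ∈ ℝ^m define ∇d*(z) = argmax_{x ∈ X} (⟨z, x⟩ - d(x)) (which exists and is unique by strong convexity). Then the map z ↦ ∇d*(z) is 1-Lipschitz: for all z, y ∈ ℝ^m, ‖∇d*(z) - ∇d*(y)‖ ≤ ‖z - y‖. -/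
/-!
The first-order optimality condition at the maximizers `u = D z`, `w = D y` gives
`⟪z - ∇d u, w - u⟫ ≤ 0` and `⟪y - ∇d w, u - w⟫ ≤ 0`, while strong convexity makes `∇d` strongly
monotone on `X`. Together, `‖u - w‖² ≤ ⟪∇d u - ∇d w, u - w⟫ ≤ ⟪z - y, u - w⟫ ≤ ‖z - y‖ ‖u - w‖`.
-/

open RealInnerProductSpace

section

variable {E : Type*} [NormedAddCommGroup E] [InnerProductSpace ℝ E]

theorem norm_le_of_sq_norm_le_inner {a b : E} (h : ‖a‖ ^ 2 ≤ ⟪b, a⟫) : ‖a‖ ≤ ‖b‖ := by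
  rcases (norm_nonneg a).eq_or_lt with ha | ha
  · rw [← ha]
    exact norm_nonneg b
  · have := h.trans (real_inner_le_norm b a)
    nlinarith

variable [CompleteSpace E]

theorem IsMaxOn.inner_sub_gradient_nonpos {X : Set E} (hX : Convex ℝ X) {d : E → ℝ} {z u x : E}
    (hmax : IsMaxOn (fun x ↦ ⟪z, x⟫ - d x) X u) (hd : DifferentiableAt ℝ d u)
    (hu : u ∈ X) (hx : x ∈ X) : ⟪z - gradient d u, x - u⟫ ≤ 0 := by
  have hderiv : HasFDerivWithinAt (fun x ↦ ⟪z, x⟫ - d x)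
      (innerSL ℝ z - InnerProductSpace.toDual ℝ E (gradient d u)) X u :=
    ((innerSL ℝ z).hasFDerivAt.sub hd.hasGradientAt.hasFDerivAt).hasFDerivWithinAt
  have := hmax.localize.hasFDerivWithinAt_nonpos hderiv
    (sub_mem_posTangentConeAt_of_segment_subset (hX.segment_subset hu hx))
  simpa [inner_sub_left] using this

theorem sq_norm_sub_le_inner_gradient_sub_gradient {X : Set E} {d : E → ℝ}
    (hsc : ∀ x ∈ X, ∀ y ∈ X, d x - d y - ⟪gradient d y, x - y⟫ ≥ (1/2) * ‖x - y‖ ^ 2)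
    {u w : E} (hu : u ∈ X) (hw : w ∈ X) :
    ‖u - w‖ ^ 2 ≤ ⟪gradient d u - gradient d w, u - w⟫ := by
  have huw := hsc u hu w hw
  have hwu := hsc w hw u hu
  rw [← neg_sub u w, inner_neg_right, norm_neg] at hwu
  rw [inner_sub_left]
  linarith

end

theorem stmt_1_general {m : ℕ} (X : Set (EuclideanSpace ℝ (Fin m)))
    (hXconvex : Convex ℝ X)
    (d : EuclideanSpace ℝ (Fin m) → ℝ) (hd : Differentiable ℝ d)
    (hsc : ∀ x ∈ X, ∀ y ∈ X,
      d x - d y - ⟪gradient d y, x - y⟫ ≥ (1/2) * ‖x - y‖ ^ 2)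
    (D : EuclideanSpace ℝ (Fin m) → EuclideanSpace ℝ (Fin m))
    (hD : ∀ z, D z ∈ X ∧ ∀ x ∈ X, ⟪z, x⟫ - d x ≤ ⟪z, D z⟫ - d (D z)) :
    ∀ z y, ‖D z - D y‖ ≤ ‖z - y‖ := by
  have optimality : ∀ z, ∀ x ∈ X, ⟪z - gradient d (D z), x - D z⟫ ≤ 0 := fun z x hx ↦
    (isMaxOn_iff.mpr (hD z).2).inner_sub_gradient_nonpos hXconvex (hd _) (hD z).1 hx
  intro z y
  apply norm_le_of_sq_norm_le_inner
  have hz := optimality z (D y) (hD y).1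
  have hy := optimality y (D z) (hD z).1
  have hmono := sq_norm_sub_le_inner_gradient_sub_gradient hsc (hD z).1 (hD y).1
  rw [← neg_sub (D z) (D y), inner_neg_right] at hz
  simp only [inner_sub_left] at hz hy hmono ⊢
  linarith

theorem stmt_1 {m : ℕ} (X : Set (EuclideanSpace ℝ (Fin m)))
    (hXne : X.Nonempty) (hXclosed : IsClosed X) (hXconvex : Convex ℝ X)
    (d : EuclideanSpace ℝ (Fin m) → ℝ) (hd : Differentiable ℝ d)
    (hsc : ∀ x ∈ X, ∀ y ∈ X,
      d x - d y - ⟪gradient d y, x - y⟫ ≥ (1/2) * ‖x - y‖ ^ 2)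
    (D : EuclideanSpace ℝ (Fin m) → EuclideanSpace ℝ (Fin m))
    (hD : ∀ z, D z ∈ X ∧ ∀ x ∈ X, ⟪z, x⟫ - d x ≤ ⟪z, D z⟫ - d (D z)) :
    ∀ z y, ‖D z - D y‖ ≤ ‖z - y‖ :=
  stmt_1_general X hXconvex d hd hsc D hD
end

section
/- Let P ∈ ℝ^{n×n} be doubly stochastic (P𝟏 = 𝟏 and 𝟏ᵀP = 𝟏ᵀ, entries in [0,1]) with strictly positive diagonal entries, and suppose the associated graph (with edges where p_ij > 0) is connected. Then the second largest singular value of P satisfies σ₂(P) < 1. -/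
open Finset Matrix

/-!
For doubly stochastic `P` and any `v`,
`∑ᵢ ∑ⱼ ∑ₖ pᵢⱼ pᵢₖ (vⱼ - vₖ)² = 2 (‖v‖² - ‖Pv‖²)`: row `i` contributes twice the variance of `v`
under the distribution `pᵢ·`, and the column sums turn `∑ᵢ ∑ⱼ pᵢⱼ vⱼ²` back into `‖v‖²`.
An eigenvector `v` of `PᵀP` with eigenvalue `≥ 1` has `‖Pv‖² ≥ ‖v‖²`, so every term vanishes;
since `pᵢᵢ > 0`, the term `(i, j, i)` forces `vⱼ = vᵢ` whenever `pᵢⱼ > 0`, and by connectivity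
`v` is constant. Orthonormal eigenvectors in the line of constant vectors number at most one.
-/

theorem sum_sum_mul_mul_sub_sq_of_sum_eq_one {ι R : Type*} [Fintype ι] [CommRing R]
    (a v : ι → R) (ha : ∑ j, a j = 1) :
    ∑ j, ∑ k, a j * a k * (v j - v k) ^ 2
      = 2 * (∑ j, a j * v j ^ 2 - (∑ j, a j * v j) ^ 2) := by
  have expand : ∀ j, ∑ k, a j * a k * (v j - v k) ^ 2
      = a j * v j ^ 2 * ∑ k, a k - 2 * (a j * v j) * ∑ k, a k * v k
        + a j * ∑ k, a k * v k ^ 2 := by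
    intro j
    simp only [mul_sum, ← sum_sub_distrib, ← sum_add_distrib]
    exact sum_congr rfl fun k _ => by ring
  simp only [expand, ha, sum_add_distrib, sum_sub_distrib, ← sum_mul, ← mul_sum]
  ring

namespace Matrix

variable {ι R : Type*} [Fintype ι]

theorem sum_sum_sum_mul_mul_sub_sq [CommRing R] {P : Matrix ι ι R}
    (hrow : ∀ i, ∑ j, P i j = 1) (hcol : ∀ j, ∑ i, P i j = 1) (v : ι → R) :
    ∑ i, ∑ j, ∑ k, P i j * P i k * (v j - v k) ^ 2 = 2 * (v ⬝ᵥ v - P *ᵥ v ⬝ᵥ P *ᵥ v) := by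
  have hcol_sum : ∑ i, ∑ j, P i j * v j ^ 2 = v ⬝ᵥ v := by
    rw [sum_comm]
    simp only [dotProduct, ← sum_mul, hcol, one_mul, sq]
  simp only [fun i => sum_sum_mul_mul_sub_sq_of_sum_eq_one (P i) v (hrow i), ← mul_sum,
    sum_sub_distrib, hcol_sum]
  simp [dotProduct, mulVec, sq]

theorem eq_of_dotProduct_self_le_of_pos [CommRing R] [LinearOrder R] [IsStrictOrderedRing R]
    {P : Matrix ι ι R} (hnonneg : ∀ i j, 0 ≤ P i j)
    (hrow : ∀ i, ∑ j, P i j = 1) (hcol : ∀ j, ∑ i, P i j = 1) (hdiag : ∀ i, 0 < P i i)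
    {v : ι → R} (hv : v ⬝ᵥ v ≤ P *ᵥ v ⬝ᵥ P *ᵥ v) {i j : ι} (hij : 0 < P i j) : v i = v j := by
  have hterm : ∀ i j k, 0 ≤ P i j * P i k * (v j - v k) ^ 2 := fun i j k =>
    mul_nonneg (mul_nonneg (hnonneg _ _) (hnonneg _ _)) (sq_nonneg _)
  have hterm_nonpos : P i j * P i i * (v j - v i) ^ 2 ≤ 0 := by
    calc P i j * P i i * (v j - v i) ^ 2
        ≤ ∑ k, P i j * P i k * (v j - v k) ^ 2 :=
          single_le_sum (fun k _ => hterm i j k) (mem_univ i)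
      _ ≤ ∑ j, ∑ k, P i j * P i k * (v j - v k) ^ 2 :=
          single_le_sum (fun j _ => sum_nonneg fun k _ => hterm i j k) (mem_univ j)
      _ ≤ ∑ i, ∑ j, ∑ k, P i j * P i k * (v j - v k) ^ 2 :=
          single_le_sum (fun i _ => sum_nonneg fun j _ => sum_nonneg fun k _ => hterm i j k)
            (mem_univ i)
      _ ≤ 0 := by rw [sum_sum_sum_mul_mul_sub_sq hrow hcol]; linarith
  have hsq : (v j - v i) ^ 2 = 0 :=
    le_antisymm (nonpos_of_mul_nonpos_right hterm_nonpos (mul_pos hij (hdiag i))) (sq_nonneg _)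
  exact (sub_eq_zero.1 (pow_eq_zero_iff two_ne_zero |>.1 hsq)).symm

theorem IsHermitian.dotProduct_mulVec_eigenvectorBasis [DecidableEq ι] {A : Matrix ι ι ℝ}
    (hH : (Aᵀ * A).IsHermitian) (c : ι) :
    A *ᵥ ⇑(hH.eigenvectorBasis c) ⬝ᵥ A *ᵥ ⇑(hH.eigenvectorBasis c) = hH.eigenvalues c := by
  rw [hH.eigenvalues_eq, star_trivial, RCLike.re_to_real, ← mulVec_mulVec, dotProduct_mulVec _ Aᵀ,
    vecMul_transpose]

end Matrix

theorem SimpleGraph.Preconnected.eq_of_forall_adj {V α : Type*} {G : SimpleGraph V}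
    (hG : G.Preconnected) {f : V → α} (h : ∀ i j, G.Adj i j → f i = f j) (i j : V) :
    f i = f j := by
  obtain ⟨w⟩ := hG i j
  induction w with
  | nil => rfl
  | cons hadj _ ih => exact (h _ _ hadj).trans ih

theorem LinearIndependent.ncard_le_one_of_mem_span_singleton {K E ι : Type*} [Finite ι]
    [DivisionRing K] [AddCommGroup E] [Module K E] {b : ι → E} (hb : LinearIndependent K b)
    (u : E) {s : Set ι} (hs : ∀ i ∈ s, b i ∈ Submodule.span K {u}) : s.ncard ≤ 1 := by
  have : Fintype s := Fintype.ofFinite s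
  have hli : LinearIndependent K (fun i : s => (⟨b i, hs i i.2⟩ : Submodule.span K {u})) :=
    LinearIndependent.of_comp (Submodule.span K {u}).subtype (hb.comp _ Subtype.val_injective)
  calc s.ncard = Fintype.card s := by rw [← Nat.card_coe_set_eq, Nat.card_eq_fintype_card]
    _ ≤ Module.finrank K (Submodule.span K {u}) := hli.fintype_card_le_finrank
    _ ≤ 1 := by simpa using finrank_span_le_card (R := K) ({u} : Set E)

theorem EuclideanSpace.dotProduct_self_eq_norm_sq {ι : Type*} [Fintype ι]
    (v : EuclideanSpace ℝ ι) : ⇑v ⬝ᵥ ⇑v = ‖v‖ ^ 2 := by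
  rw [← real_inner_self_eq_norm_sq, EuclideanSpace.inner_eq_star_dotProduct, star_trivial]

theorem EuclideanSpace.mem_span_const_of_forall_eq {ι 𝕜 : Type*} [Nonempty ι] [RCLike 𝕜]
    {v : EuclideanSpace 𝕜 ι} (hv : ∀ i j, v i = v j) :
    v ∈ Submodule.span 𝕜 {WithLp.toLp 2 (fun _ => 1)} := by
  obtain ⟨i₀⟩ := ‹Nonempty ι›
  refine Submodule.mem_span_singleton.2 ⟨v i₀, ?_⟩
  ext i
  simp [hv i i₀]

theorem stmt_3_general {n : ℕ} (P : Matrix (Fin n) (Fin n) ℝ)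
    (hnonneg : ∀ i j, 0 ≤ P i j)
    (hrow : ∀ i, ∑ j, P i j = 1) (hcol : ∀ j, ∑ i, P i j = 1)
    (hdiag : ∀ i, 0 < P i i)
    (G : SimpleGraph (Fin n))
    (hG : ∀ i j, G.Adj i j ↔ i ≠ j ∧ 0 < P i j)
    (hconn : G.Connected)
    (hH : (Pᵀ * P).IsHermitian) :
    {i | 1 ≤ hH.eigenvalues i}.ncard ≤ 1 := by
  have : Nonempty (Fin n) := hconn.nonempty
  refine hH.eigenvectorBasis.orthonormal.linearIndependent.ncard_le_one_of_mem_span_singleton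
    (WithLp.toLp 2 fun _ => 1) fun c hc => ?_
  have hv : ⇑(hH.eigenvectorBasis c) ⬝ᵥ ⇑(hH.eigenvectorBasis c)
      ≤ P *ᵥ ⇑(hH.eigenvectorBasis c) ⬝ᵥ P *ᵥ ⇑(hH.eigenvectorBasis c) := by
    rwa [EuclideanSpace.dotProduct_self_eq_norm_sq, hH.eigenvectorBasis.orthonormal.1 c, one_pow,
      hH.dotProduct_mulVec_eigenvectorBasis]
  refine EuclideanSpace.mem_span_const_of_forall_eq (hconn.preconnected.eq_of_forall_adj ?_)
  exact fun i j hij =>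
    eq_of_dotProduct_self_le_of_pos hnonneg hrow hcol hdiag hv ((hG i j).1 hij).2

/-- Second largest singular value of a doubly stochastic matrix with positive diagonal
and connected associated graph is `< 1`.  The singular values of `P` are the square roots
of the eigenvalues of `Pᵀ * P`; the claim `σ₂(P) < 1` is expressed equivalently as:
at most one eigenvalue of `Pᵀ * P` is `≥ 1`. -/
theorem stmt_3 {n : ℕ} (hn : 0 < n) (P : Matrix (Fin n) (Fin n) ℝ)
    (hnonneg : ∀ i j, 0 ≤ P i j) (hle : ∀ i j, P i j ≤ 1)
    (hrow : ∀ i, ∑ j, P i j = 1) (hcol : ∀ j, ∑ i, P i j = 1)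
    (hdiag : ∀ i, 0 < P i i)
    (G : SimpleGraph (Fin n))
    (hG : ∀ i j, G.Adj i j ↔ i ≠ j ∧ 0 < P i j)
    (hconn : G.Connected)
    (hH : (Pᵀ * P).IsHermitian) :
    {i | 1 ≤ hH.eigenvalues i}.ncard ≤ 1 :=
  stmt_3_general P hnonneg hrow hcol hdiag G hG hconn hH
end

section
/- Let β ∈ (0,1), L > 0, and let M(a) be the 2×2 matrix with rows [β, β] and [aL(β+1), β(aL+1)] for a > 0. If a < (1-β)²/(2βL), then the spectral radius of M(a) is strictly less than 1. -/
/-!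
The eigenvalues of `M` are the roots of `p z = z ^ 2 - t z + d` with `t = β (2 + a L)` and
`d = β ^ 2 - a L β`. By the Jury (Schur–Cohn) criterion for real quadratics, both roots lie in the
open unit disc as soon as `d < 1`, `p 1 > 0` and `p (-1) > 0`. Here `p (-1) = (1 + β) ^ 2`, and
`p 1 = (1 - β) ^ 2 - 2 a L β` is positive exactly when `a < (1 - β) ^ 2 / (2 β L)`.
-/

theorem Matrix.mem_spectrum_fin_two_iff {K : Type*} [Field K] (A : Matrix (Fin 2) (Fin 2) K)
    (μ : K) : μ ∈ spectrum K A ↔ μ ^ 2 - A.trace * μ + A.det = 0 := by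
  rw [Matrix.mem_spectrum_iff_isRoot_charpoly, A.charpoly_fin_two]
  simp

-- `p 1 > 0` and `p (-1) > 0` put both real roots on the same side of `1` and of `-1`,
-- and their product `d < 1` rules out both lying outside `[-1, 1]`.
theorem abs_lt_one_of_sq_sub_mul_add_eq_zero {t d x : ℝ} (hd : d < 1) (hp1 : 0 < 1 - t + d)
    (hm1 : 0 < 1 + t + d) (hx : x ^ 2 - t * x + d = 0) : |x| < 1 := by
  rw [abs_lt]
  constructor <;> nlinarith

theorem Complex.norm_lt_one_of_sq_sub_mul_add_eq_zero {t d : ℝ} (hd : d < 1)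
    (hp1 : 0 < 1 - t + d) (hm1 : 0 < 1 + t + d) {μ : ℂ} (hμ : μ ^ 2 - t * μ + d = 0) :
    ‖μ‖ < 1 := by
  have him : μ.im * (2 * μ.re - t) = 0 := by
    have := congrArg Complex.im hμ
    simp [pow_two] at this
    linear_combination this
  have hre : μ.re ^ 2 - μ.im ^ 2 - t * μ.re + d = 0 := by
    have := congrArg Complex.re hμ
    simp [pow_two] at this
    linear_combination this
  rcases mul_eq_zero.mp him with h | h
  · have hμ_re : μ = (μ.re : ℂ) := Complex.ext rfl (by simpa using h)
    rw [hμ_re, Complex.norm_real, Real.norm_eq_abs]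
    refine abs_lt_one_of_sq_sub_mul_add_eq_zero hd hp1 hm1 ?_
    rw [h] at hre
    linear_combination hre
  · -- a non-real root and its conjugate have product `d`
    have hsq : ‖μ‖ ^ 2 = d := by
      rw [Complex.sq_norm, Complex.normSq_apply]
      have : μ.re = t / 2 := by linarith
      rw [this] at hre ⊢
      linear_combination -hre
    exact (sq_lt_one_iff₀ (norm_nonneg μ)).mp (hsq ▸ hd)

theorem stmt_5 (β L a : ℝ) (hβ : β ∈ Set.Ioo (0:ℝ) 1) (hL : 0 < L) (ha : 0 < a)
    (hcond : a < (1 - β) ^ 2 / (2 * β * L))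
    (M : Matrix (Fin 2) (Fin 2) ℝ)
    (hM : M = !![β, β; a * L * (β + 1), β * (a * L + 1)]) :
    ∀ μ ∈ spectrum ℂ (M.map (Complex.ofReal ·)), ‖μ‖ < 1 := by
  obtain ⟨hβ0, hβ1⟩ := hβ
  have hgap : 2 * β * (a * L) < (1 - β) ^ 2 := by
    rw [lt_div_iff₀ (by positivity)] at hcond
    linarith
  have haLβ : 0 < a * L * β := by positivity
  intro μ hμ
  rw [Matrix.mem_spectrum_fin_two_iff] at hμ
  refine Complex.norm_lt_one_of_sq_sub_mul_add_eq_zero (t := β * (2 + a * L))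
    (d := β ^ 2 - a * L * β) (by nlinarith) (by linarith) (by nlinarith) ?_
  simp [hM, Matrix.trace_fin_two, Matrix.det_fin_two] at hμ
  push_cast
  linear_combination hμ
end

section
/- Let X ⊆ ℝ^m be closed convex, d : ℝ^m → ℝ differentiable and 1-strongly convex on X with x⁽⁰⁾ = argmin_{x∈X} d(x) and d(x⁽⁰⁾) = 0. Let {ζ⁽ᵗ⁾}_{t≥1} be vectors in ℝ^m, {a_t}_{t≥1} positive reals, and define ν⁽ᵗ⁾ = argmin_{x∈X} (Σ_{τ=1}^{t} a_τ⟨ζ⁽τ⁾, x⟩ + d(x)) with ν⁽⁰⁾ = x⁽⁰⁾. Then for every x* ∈ X and t ≥ 1, Σ_{τ=1}^{t} a_τ⟨ζ⁽τ⁾, ν⁽τ⁾ - x*⟩ ≤ d(x*) - Σ_{τ=1}^{t} (1/2)‖ν⁽τ⁾ - ν⁽τ⁻¹⁾‖². -/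
open RealInnerProductSpace Finset

lemma aux_growth {m : ℕ} {X : Set (EuclideanSpace ℝ (Fin m))} (hXconvex : Convex ℝ X)
    {d : EuclideanSpace ℝ (Fin m) → ℝ}
    (hsc : ∀ x ∈ X, ∀ y ∈ X,
      d x - d y - ⟪gradient d y, x - y⟫ ≥ (1/2) * ‖x - y‖ ^ 2)
    (v : EuclideanSpace ℝ (Fin m)) {y : EuclideanSpace ℝ (Fin m)} (hy : y ∈ X)
    (hymin : ∀ x ∈ X, ⟪v, y⟫ + d y ≤ ⟪v, x⟫ + d x)
    {x : EuclideanSpace ℝ (Fin m)} (hx : x ∈ X) :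
    ⟪v, y⟫ + d y + (1/2) * ‖x - y‖ ^ 2 ≤ ⟪v, x⟫ + d x := by
  set N := ‖x - y‖ ^ 2 with hN
  have hstep : ∀ l : ℝ, 0 < l → l ≤ 1 →
      (1/2) * (1 - l) * N ≤ ⟪v, x⟫ + d x - (⟪v, y⟫ + d y) := by
    intro l hl0 hl1
    set z := y + l • (x - y) with hzdef
    have hz : z ∈ X := by
      have : z = (1 - l) • y + l • x := by rw [hzdef]; module
      rw [this]
      exact hXconvex hy hx (by linarith) hl0.le (by ring)
    have hxz : x - z = (1 - l) • (x - y) := by rw [hzdef]; module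
    have hyz : y - z = (-l) • (x - y) := by rw [hzdef]; module
    set g := gradient d z with hg
    have h1 := hsc x hx z hz
    have h2 := hsc y hy z hz
    rw [hxz, real_inner_smul_right, norm_smul] at h1
    rw [hyz, real_inner_smul_right, norm_smul] at h2
    have e1 : (‖(1 : ℝ) - l‖ * ‖x - y‖) ^ 2 = (1 - l) ^ 2 * N := by
      rw [mul_pow, hN, Real.norm_eq_abs, sq_abs]
    have e2 : (‖(-l : ℝ)‖ * ‖x - y‖) ^ 2 = l ^ 2 * N := by
      rw [mul_pow, hN, Real.norm_eq_abs, sq_abs]; ring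
    rw [e1] at h1
    rw [e2] at h2
    have hdz : d z ≤ l * d x + (1 - l) * d y - (1/2) * l * (1 - l) * N := by
      nlinarith [mul_le_mul_of_nonneg_left h1.le hl0.le,
        mul_le_mul_of_nonneg_left h2.le (by linarith : (0:ℝ) ≤ 1 - l)]
    have hvz : ⟪v, z⟫ = ⟪v, y⟫ + l * (⟪v, x⟫ - ⟪v, y⟫) := by
      rw [hzdef, inner_add_right, real_inner_smul_right, inner_sub_right]
    have hmin := hymin z hz
    rw [hvz] at hmin
    have h3 : l * ((1/2) * (1 - l) * N) ≤ l * (⟪v, x⟫ + d x - (⟪v, y⟫ + d y)) := by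
      nlinarith
    exact le_of_mul_le_mul_left h3 hl0
  have hkey : ∀ ε : ℝ, 0 < ε →
      (1/2) * N ≤ ⟪v, x⟫ + d x - (⟪v, y⟫ + d y) + ε := by
    intro ε hε
    rcases eq_or_ne x y with rfl | hne
    · have := hymin x hx
      simp only [hN, sub_self, norm_zero] at *
      norm_num
      linarith
    · have hNpos : 0 < N := by
        rw [hN]
        exact pow_pos (norm_pos_iff.mpr (sub_ne_zero.mpr hne)) 2
      set l := min 1 (ε / N) with hl
      have hl0 : 0 < l := lt_min one_pos (div_pos hε hNpos)
      have hl1 : l ≤ 1 := min_le_left _ _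
      have hlN : l * N ≤ ε := by
        calc l * N ≤ (ε / N) * N := by
              exact mul_le_mul_of_nonneg_right (min_le_right _ _) hNpos.le
          _ = ε := div_mul_cancel₀ ε hNpos.ne'
      have := hstep l hl0 hl1
      nlinarith
  have := le_of_forall_pos_le_add hkey
  linarith
theorem stmt_9 {m : ℕ} (X : Set (EuclideanSpace ℝ (Fin m)))
    (hXclosed : IsClosed X) (hXconvex : Convex ℝ X)
    (d : EuclideanSpace ℝ (Fin m) → ℝ) (hd : Differentiable ℝ d)
    (hsc : ∀ x ∈ X, ∀ y ∈ X,
      d x - d y - ⟪gradient d y, x - y⟫ ≥ (1/2) * ‖x - y‖ ^ 2)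
    (x₀ : EuclideanSpace ℝ (Fin m)) (hx₀X : x₀ ∈ X)
    (hx₀min : ∀ x ∈ X, d x₀ ≤ d x) (hdx₀ : d x₀ = 0)
    (ζ : ℕ → EuclideanSpace ℝ (Fin m)) (a : ℕ → ℝ) (ha : ∀ t, 0 < a t)
    (ν : ℕ → EuclideanSpace ℝ (Fin m)) (hν0 : ν 0 = x₀)
    (hνX : ∀ t, ν t ∈ X)
    (hνmin : ∀ t ≥ 1, ∀ x ∈ X,
      (∑ τ ∈ Finset.Icc 1 t, a τ * ⟪ζ τ, ν t⟫) + d (ν t) ≤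
      (∑ τ ∈ Finset.Icc 1 t, a τ * ⟪ζ τ, x⟫) + d x) :
    ∀ xs ∈ X, ∀ t ≥ 1,
      ∑ τ ∈ Finset.Icc 1 t, a τ * ⟪ζ τ, ν τ - xs⟫ ≤
        d xs - ∑ τ ∈ Finset.Icc 1 t, (1/2) * ‖ν τ - ν (τ - 1)‖ ^ 2 := by
  intro xs hxs t ht
  set v : ℕ → EuclideanSpace ℝ (Fin m) := fun s => ∑ τ ∈ Finset.Icc 1 s, a τ • ζ τ with hvdef
  have hv : ∀ s x, ⟪v s, x⟫ = ∑ τ ∈ Finset.Icc 1 s, a τ * ⟪ζ τ, x⟫ := by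
    intro s x
    rw [hvdef]
    rw [sum_inner]
    exact Finset.sum_congr rfl fun τ _ => real_inner_smul_left _ _ _
  have hmin : ∀ s, ∀ x ∈ X, ⟪v s, ν s⟫ + d (ν s) ≤ ⟪v s, x⟫ + d x := by
    intro s
    match s with
    | 0 =>
      intro x hxX
      simp only [hv]
      simp [hν0, hdx₀, hx₀min x hxX]
      linarith [hx₀min x hxX]
    | (n+1) =>
      intro x hxX
      rw [hv, hv]
      exact hνmin (n+1) (Nat.le_add_left 1 n) x hxX
  have hvsucc : ∀ s x, ⟪v (s+1), x⟫ = ⟪v s, x⟫ + a (s+1) * ⟪ζ (s+1), x⟫ := by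
    intro s x
    rw [hv, hv, Finset.sum_Icc_succ_top (Nat.le_add_left 1 s)]
  have key : ∀ s, ⟪v s, ν s⟫ + d (ν s) +
      (a (s+1) * ⟪ζ (s+1), ν (s+1)⟫ + (1/2) * ‖ν (s+1) - ν s‖ ^ 2) ≤
      ⟪v (s+1), ν (s+1)⟫ + d (ν (s+1)) := by
    intro s
    have := aux_growth hXconvex hsc (v s) (hνX s) (hmin s) (hνX (s+1))
    rw [hvsucc]
    linarith
  have main : ∀ s : ℕ,
      (∑ τ ∈ Finset.Icc 1 s, (a τ * ⟪ζ τ, ν τ⟫ + (1/2) * ‖ν τ - ν (τ - 1)‖ ^ 2)) ≤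
      ⟪v s, ν s⟫ + d (ν s) := by
    intro s
    induction s with
    | zero =>
      simp [hv, hν0, hdx₀]
    | succ n ih =>
      rw [Finset.sum_Icc_succ_top (Nat.le_add_left 1 n)]
      have := key n
      simp only [Nat.add_sub_cancel]
      linarith
  have hfin := hmin t xs hxs
  have h1 := (main t).trans hfin
  rw [hv] at h1
  simp only [inner_sub_right, mul_sub, Finset.sum_sub_distrib]
  rw [Finset.sum_add_distrib] at h1
  linarith
end

section
/- Let β ∈ (0,1), K > 0, a_t = a(t+1), A_t = a t(t+3)/2, t₀ = ⌈3/(1-β)⌉, and C = t₀ K/(1-β). Suppose nonnegative reals {q_t} satisfy q_t ≤ β q_{t-1} + (a_t/A_t) K for t ≥ 1 and q_t ≤ (a_t/A_t) C for all 1 ≤ t ≤ t₀. Then q_t ≤ (a_t/A_t) C for all t ≥ 1. -/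
set_option maxHeartbeats 1000000

lemma step_key (β K C T s : ℝ) (hβ0 : 0 < β) (hβ1 : β < 1) (hK : 0 < K)
    (hT : 3 ≤ T) (hTβ : 3 ≤ T * (1 - β)) (hsT : T ≤ s)
    (hCv : C * (1 - β) = T * K) :
    β * (2 * (s + 1) / (s * (s + 3))) * C + (2 * (s + 2) / ((s + 1) * (s + 4))) * K
      ≤ (2 * (s + 2) / ((s + 1) * (s + 4))) * C := by
  have h1β : (0:ℝ) < 1 - β := by linarith
  have hs3 : (3:ℝ) ≤ s := le_trans hT hsT
  have hsβ : 3 ≤ s * (1 - β) := by nlinarith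
  have hs0 : (0:ℝ) < s := by linarith
  have hE : (0:ℝ) < (s+1)^2*(s+4) := by nlinarith
  have hpoly : s*(s^2+3*s+4) ≤ 2*((s+1)^2*(s+4)) := by nlinarith
  have hsB : (s+1)^2*(s+4) ≤ s*((1-β)*((s+1)^2*(s+4)) - (s^2+3*s+4)) := by
    linarith [mul_nonneg (by nlinarith : (0:ℝ) ≤ s*(1-β)-3) hE.le, hpoly]
  have hB : (0:ℝ) ≤ (1-β)*((s+1)^2*(s+4)) - (s^2+3*s+4) := by nlinarith [hsB, hE]
  -- key scaled inequality
  have e2 : (s*(1-β))*(C*((1-β)*((s+1)^2*(s+4)) - (s^2+3*s+4)))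
      = s*(T*K)*((1-β)*((s+1)^2*(s+4)) - (s^2+3*s+4)) := by rw [← hCv]; ring
  have H2 : (0:ℝ) ≤ K*(2*((s+1)^2*(s+4)) - s*(s^2+3*s+4)) :=
    mul_nonneg hK.le (by linarith)
  have H3 : (0:ℝ) ≤ K*(s*((1-β)*((s+1)^2*(s+4)) - (s^2+3*s+4)) - (s+1)^2*(s+4)) :=
    mul_nonneg hK.le (by linarith)
  have H4 : (0:ℝ) ≤ K*(T-3)*(s*((1-β)*((s+1)^2*(s+4)) - (s^2+3*s+4))) :=
    mul_nonneg (mul_nonneg hK.le (by linarith)) (mul_nonneg hs0.le hB)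
  have H5 : (0:ℝ) ≤ K*(1-β)*(s*(s^2+3*s+4)) :=
    mul_nonneg (mul_nonneg hK.le h1β.le) (by nlinarith)
  have key2 : (s*(1-β)) * (K*(s*(s+2)*(s+3)))
      ≤ (s*(1-β)) * (C*((1-β)*((s+1)^2*(s+4)) - (s^2+3*s+4))) := by
    linarith [e2, H2, H3, H4, H5]
  have key : K*(s*(s+2)*(s+3)) ≤ C*((1-β)*((s+1)^2*(s+4)) - (s^2+3*s+4)) :=
    le_of_mul_le_mul_left key2 (by positivity)
  have hfrac : β * (2 * (s + 1) / (s * (s + 3))) * C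
      ≤ (2 * (s + 2) / ((s + 1) * (s + 4))) * (C - K) := by
    rw [show β * (2 * (s + 1) / (s * (s + 3))) * C = (β*(2*(s+1))*C)/(s*(s+3)) by ring,
        show (2 * (s + 2) / ((s + 1) * (s + 4))) * (C-K) = (2*(s+2)*(C-K))/((s+1)*(s+4)) by ring,
        div_le_div_iff₀ (by nlinarith) (by nlinarith)]
    linarith [key]
  linarith [hfrac]

theorem stmt_17 (β K a : ℝ) (hβ : β ∈ Set.Ioo (0:ℝ) 1) (hK : 0 < K) (ha : 0 < a)
    (aa A : ℕ → ℝ) (haa : ∀ t, aa t = a * ((t : ℝ) + 1))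
    (hA : ∀ t, A t = a * (t : ℝ) * ((t : ℝ) + 3) / 2)
    (t₀ : ℕ) (ht₀ : t₀ = ⌈3 / (1 - β)⌉₊)
    (C : ℝ) (hC : C = (t₀ : ℝ) * K / (1 - β))
    (q : ℕ → ℝ) (hq : ∀ t, 0 ≤ q t)
    (hrec : ∀ t : ℕ, 1 ≤ t → q t ≤ β * q (t - 1) + (aa t / A t) * K)
    (hbase : ∀ t : ℕ, 1 ≤ t → t ≤ t₀ → q t ≤ (aa t / A t) * C) :
    ∀ t : ℕ, 1 ≤ t → q t ≤ (aa t / A t) * C := by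
  obtain ⟨hβ0, hβ1⟩ := hβ
  have h1β : (0:ℝ) < 1 - β := by linarith
  have hle : (3:ℝ) / (1 - β) ≤ (t₀ : ℝ) := ht₀ ▸ Nat.le_ceil _
  have hTβ : (3:ℝ) ≤ (t₀:ℝ) * (1 - β) := by
    rw [div_le_iff₀ h1β] at hle; linarith
  have hT3 : (3:ℝ) ≤ (t₀:ℝ) := by nlinarith
  have hT3n : 3 ≤ t₀ := by exact_mod_cast hT3
  have hCv : C * (1 - β) = (t₀:ℝ) * K := by rw [hC]; field_simp
  -- fraction rewriting
  have hfrac : ∀ n : ℕ, 1 ≤ n →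
      aa n / A n = 2 * ((n:ℝ) + 1) / ((n:ℝ) * ((n:ℝ) + 3)) := by
    intro n hn
    have hn0 : (0:ℝ) < (n:ℝ) := by exact_mod_cast hn
    rw [haa n, hA n]
    field_simp
  have claim : ∀ t : ℕ, t₀ ≤ t → q t ≤ (aa t / A t) * C := by
    intro t ht
    induction t, ht using Nat.le_induction with
    | base => exact hbase t₀ (by omega) le_rfl
    | succ t ht ih =>
      have hr := hrec (t + 1) (by omega)
      simp only [Nat.add_sub_cancel] at hr
      have hst : ((t₀:ℝ)) ≤ (t:ℝ) := by exact_mod_cast ht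
      have hqt : β * q t ≤ β * ((aa t / A t) * C) :=
        mul_le_mul_of_nonneg_left ih hβ0.le
      have h1 : aa t / A t = 2 * ((t:ℝ) + 1) / ((t:ℝ) * ((t:ℝ) + 3)) :=
        hfrac t (by omega)
      have h2 : aa (t+1) / A (t+1) = 2 * ((t:ℝ) + 2) / (((t:ℝ) + 1) * ((t:ℝ) + 4)) := by
        rw [hfrac (t+1) (by omega)]
        push_cast
        ring_nf
      have hkey := step_key β K C (t₀:ℝ) (t:ℝ) hβ0 hβ1 hK hT3 hTβ hst hCv
      rw [h1] at hqt
      rw [h2] at hr ⊢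
      linarith [hkey, hqt, hr]
  intro t ht
  rcases le_or_gt t t₀ with h | h
  · exact hbase t ht h
  · exact claim t h.le
end
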